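/- arXiv:2212.09224 — 2 statements merged into one kernel-verified Lean document; each statement's English description precedes it below -/
import Mathlib

section
/- Let X₁ be an L-compact L-space, X₂ an L-regular L-space, and f : X₁ → X₂ a proper L-morphism. Then f(↓x) = ↓f(x) for every x ∈ X₁. -/
open Set Topology

/-- An L-space: a Priestley space (compact, Priestley separation) that is an
Esakia space (downward closure of clopens is clopen) and extremally
order-disconnected (closure of open upper sets is open). -/
structure IsLSpace (X : Type*) [TopologicalSpace X] [PartialOrder X] : Prop where
  compact : CompactSpace X
  priestley : ∀ x y : X, ¬ x ≤ y →
    ∃ U : Set X, IsClopen U ∧ IsUpperSet U ∧ x ∈ U ∧ y ∉ U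
  esakia : ∀ U : Set X, IsClopen U → IsClopen (lowerClosure U : Set X)
  eod : ∀ U : Set X, IsOpen U → IsUpperSet U → IsOpen (closure U)

/-- The localic part of an L-space: points whose down-set is clopen. -/
def localicPart (X : Type*) [TopologicalSpace X] [PartialOrder X] : Set X :=
  {y : X | IsClopen (Set.Iic y)}

/-- An L-morphism: a continuous order-preserving map such that
`f ⁻¹' (closure U) = closure (f ⁻¹' U)` for every open upper set `U`. -/
def IsLMorphism {X₁ X₂ : Type*} [TopologicalSpace X₁] [PartialOrder X₁]
    [TopologicalSpace X₂] [PartialOrder X₂] (f : X₁ → X₂) : Prop :=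
  Continuous f ∧ Monotone f ∧
    ∀ U : Set X₂, IsOpen U → IsUpperSet U → f ⁻¹' closure U = closure (f ⁻¹' U)

/-- `V ≪ U`: for every open upper set `W`, `U ⊆ closure W` implies `V ⊆ W`. -/
def WayBelowSet {X : Type*} [TopologicalSpace X] [PartialOrder X]
    (V U : Set X) : Prop :=
  ∀ W : Set X, IsOpen W → IsUpperSet W → U ⊆ closure W → V ⊆ W

/-- The kernel of a clopen upper set `U`: the union of all clopen upper sets
way below `U`. -/
def kernelSet {X : Type*} [TopologicalSpace X] [PartialOrder X] (U : Set X) : Set X :=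
  ⋃₀ {V : Set X | IsClopen V ∧ IsUpperSet V ∧ WayBelowSet V U}

/-- A CL-space: an L-space in which every clopen upper set `U` is packed,
i.e. `ker U` is dense in `U`. -/
def IsCLSpace (X : Type*) [TopologicalSpace X] [PartialOrder X] : Prop :=
  IsLSpace X ∧ ∀ U : Set X, IsClopen U → IsUpperSet U → U ⊆ closure (kernelSet U)

/-- A Scott upset: a closed upper set all of whose minimal elements lie in the
localic part. -/
def IsScottUpset {X : Type*} [TopologicalSpace X] [PartialOrder X] (F : Set X) : Prop :=
  IsClosed F ∧ IsUpperSet F ∧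
    ∀ x ∈ F, (∀ y ∈ F, y ≤ x → y = x) → x ∈ localicPart X

/-- A proper L-morphism: an L-morphism with `f ⁻¹' (ker U) ⊆ ker (f ⁻¹' U)`
for every clopen upper set `U`. -/
def IsProperLMorphism {X₁ X₂ : Type*} [TopologicalSpace X₁] [PartialOrder X₁]
    [TopologicalSpace X₂] [PartialOrder X₂] (f : X₁ → X₂) : Prop :=
  IsLMorphism f ∧ ∀ U : Set X₂, IsClopen U → IsUpperSet U →
    f ⁻¹' kernelSet U ⊆ kernelSet (f ⁻¹' U)

/-- Kernel-stability: `ker U ∩ ker V = ker (U ∩ V)` for clopen upper sets. -/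
def KernelStable (X : Type*) [TopologicalSpace X] [PartialOrder X] : Prop :=
  ∀ U V : Set X, IsClopen U → IsUpperSet U → IsClopen V → IsUpperSet V →
    kernelSet U ∩ kernelSet V = kernelSet (U ∩ V)

/-- Scott-stability: the intersection of two Scott upsets is a Scott upset. -/
def ScottStable (X : Type*) [TopologicalSpace X] [PartialOrder X] : Prop :=
  ∀ F G : Set X, IsScottUpset F → IsScottUpset G → IsScottUpset (F ∩ G)

/-- L-compactness: every minimal element of `X` lies in the localic part. -/
def IsLCompact (X : Type*) [TopologicalSpace X] [PartialOrder X] : Prop :=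
  ∀ x : X, (∀ y : X, y ≤ x → y = x) → x ∈ localicPart X

/-- The regular part of a clopen upper set `U`: the union of all clopen upper
sets `V` with `↓V ⊆ U`. -/
def regPart {X : Type*} [TopologicalSpace X] [PartialOrder X] (U : Set X) : Set X :=
  ⋃₀ {V : Set X | IsClopen V ∧ IsUpperSet V ∧ (lowerClosure V : Set X) ⊆ U}

/-- L-regularity: every clopen upper set `U` satisfies `U ⊆ closure (reg U)`. -/
def IsLRegular (X : Type*) [TopologicalSpace X] [PartialOrder X] : Prop :=
  ∀ U : Set X, IsClopen U → IsUpperSet U → U ⊆ closure (regPart U)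

section Aux

variable {X : Type*} [TopologicalSpace X] [PartialOrder X]

/-- In a Priestley-type space, `Iic x` is closed. -/
lemma IsLSpace.isClosed_Iic (hX : IsLSpace X) (x : X) : IsClosed (Set.Iic x) := by
  have h : Set.Iic x = ⋂₀ {S | ∃ W : Set X, IsClopen W ∧ IsUpperSet W ∧ x ∉ W ∧ S = Wᶜ} := by
    ext y
    simp only [Set.mem_sInter, Set.mem_setOf_eq, Set.mem_Iic]
    constructor
    · rintro hy S ⟨W, hWc, hWu, hxW, rfl⟩
      exact fun hyW => hxW (hWu hy hyW)
    · intro hy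
      by_contra hxy
      obtain ⟨W, hWc, hWu, hyW, hxW⟩ := hX.priestley y x hxy
      exact hy Wᶜ ⟨W, hWc, hWu, hxW, rfl⟩ hyW
  rw [h]
  refine isClosed_sInter ?_
  rintro S ⟨W, hWc, hWu, hxW, rfl⟩
  exact hWc.isOpen.isClosed_compl

/-- Every nonempty closed subset of an L-space has a minimal element. -/
lemma IsLSpace.exists_minimal (hX : IsLSpace X) {A : Set X} (hA : IsClosed A)
    (hne : A.Nonempty) : ∃ m ∈ A, ∀ w ∈ A, w ≤ m → w = m := by
  haveI := hX.compact
  obtain ⟨x, hx⟩ := hne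
  let A' : Set Xᵒᵈ := A
  have ih : ∀ c ⊆ A', IsChain (· ≤ ·) c → ∀ y ∈ c,
      ∃ ub ∈ A', ∀ z ∈ c, z ≤ ub := by
    intro c hcA hchain y hy
    have hne' : Nonempty c := ⟨⟨y, hy⟩⟩
    have key : (⋂ i : c, (A ∩ Set.Iic (OrderDual.ofDual i.1))).Nonempty := by
      apply IsCompact.nonempty_iInter_of_directed_nonempty_isCompact_isClosed
      · rintro i j
        rcases hchain.total i.2 j.2 with h | h
        · exact ⟨j, Set.inter_subset_inter_right _
            (Set.Iic_subset_Iic.2 (OrderDual.ofDual_le_ofDual.mpr h)), Set.Subset.rfl⟩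
        · exact ⟨i, Set.Subset.rfl, Set.inter_subset_inter_right _
            (Set.Iic_subset_Iic.2 (OrderDual.ofDual_le_ofDual.mpr h))⟩
      · exact fun i => ⟨OrderDual.ofDual i.1, hcA i.2, le_rfl⟩
      · exact fun i => (hA.inter (hX.isClosed_Iic _)).isCompact
      · exact fun i => hA.inter (hX.isClosed_Iic _)
    obtain ⟨lb, hlb⟩ := key
    simp only [Set.mem_iInter, Set.mem_inter_iff, Set.mem_Iic] at hlb
    refine ⟨OrderDual.toDual lb, (hlb ⟨y, hy⟩).1, fun z hz => ?_⟩
    exact OrderDual.le_toDual.mpr (hlb ⟨z, hz⟩).2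
  obtain ⟨m, hxm, hm⟩ := zorn_le_nonempty₀ A' ih (OrderDual.toDual x) hx
  refine ⟨OrderDual.ofDual m, hm.prop, fun w hw hwm => ?_⟩
  exact le_antisymm hwm (OrderDual.toDual_le.mp
    (hm.2 (y := OrderDual.toDual w) hw (OrderDual.le_toDual.mpr hwm)))

/-- In an L-compact L-space, a dense open upper set is everything. -/
lemma dense_open_upper_eq_univ (hX : IsLSpace X) (hk : IsLCompact X)
    {S : Set X} (hSo : IsOpen S) (hSu : IsUpperSet S) (hd : ∀ p : X, p ∈ closure S) :
    S = Set.univ := by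
  by_contra hne
  obtain ⟨p, hp⟩ := Set.ne_univ_iff_exists_notMem S |>.1 hne
  have hA : IsClosed (Set.Iic p ∩ Sᶜ) := (hX.isClosed_Iic p).inter hSo.isClosed_compl
  obtain ⟨m, ⟨hmp, hmS⟩, hmin⟩ := hX.exists_minimal hA ⟨p, le_rfl, hp⟩
  have hminX : ∀ w : X, w ≤ m → w = m := by
    intro w hwm
    refine hmin w ⟨hwm.trans hmp, fun hwS => hmS (hSu hwm hwS)⟩ hwm
  have hloc := hk m hminX
  have := hd m
  rw [mem_closure_iff] at this
  obtain ⟨s, hsm, hsS⟩ := this (Set.Iic m) hloc.isOpen le_rfl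
  exact hmS (hSu hsm hsS)

/-- The closure of an open upper set in an L-space is a clopen upper set. -/
lemma IsLSpace.closure_open_upper (hX : IsLSpace X) {S : Set X} (hSo : IsOpen S)
    (hSu : IsUpperSet S) : IsClopen (closure S) ∧ IsUpperSet (closure S) := by
  have hclo : IsClopen (closure S) := ⟨isClosed_closure, hX.eod S hSo hSu⟩
  refine ⟨hclo, ?_⟩
  have hK : IsClopen (lowerClosure ((closure S)ᶜ) : Set X) := hX.esakia _ hclo.compl
  have h1 : (lowerClosure ((closure S)ᶜ) : Set X) ∩ S = ∅ := by
    ext w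
    simp only [Set.mem_inter_iff, SetLike.mem_coe, mem_lowerClosure, Set.mem_compl_iff,
      Set.mem_empty_iff_false, iff_false, not_and]
    rintro ⟨k, hk, hwk⟩ hwS
    exact hk (subset_closure (hSu hwk hwS))
  have h2 : (lowerClosure ((closure S)ᶜ) : Set X) ∩ closure S = ∅ := by
    have := hK.isOpen.inter_closure (t := S)
    rw [h1] at this
    rw [closure_empty] at this
    exact Set.subset_eq_empty this rfl
  have hlow : IsLowerSet ((closure S)ᶜ) := by
    intro a b hba ha
    have hb : b ∈ (lowerClosure ((closure S)ᶜ) : Set X) :=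
      mem_lowerClosure.mpr ⟨a, ha, hba⟩
    by_contra hbS
    simp only [Set.mem_compl_iff, not_not] at hbS
    exact absurd (Set.mem_inter hb hbS) (by rw [h2]; exact Set.notMem_empty b)
  simpa using hlow.compl

lemma crux {X₁ X₂ : Type*} [TopologicalSpace X₁] [PartialOrder X₁]
    [TopologicalSpace X₂] [PartialOrder X₂]
    (hX₁ : IsLSpace X₁) (hX₂ : IsLSpace X₂) (hk : IsLCompact X₁) (hr : IsLRegular X₂)
    {f : X₁ → X₂} (hfc : Continuous f) (hfm : Monotone f)
    (hfj : ∀ U : Set X₂, IsOpen U → IsUpperSet U → f ⁻¹' closure U = closure (f ⁻¹' U))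
    {x : X₁} {z : X₂} (hz : z ≤ f x)
    {U V : Set X₂} (hUc : IsClopen U) (hUu : IsUpperSet U) (hVc : IsClopen V)
    (hVu : IsUpperSet V) (hzU : z ∈ U) (hzV : z ∉ V)
    {W : Set X₁} (hWc : IsClopen W) (hWu : IsUpperSet W) (hxW : x ∉ W)
    (hsub : f ⁻¹' U ⊆ f ⁻¹' V ∪ W) : False := by
  haveI := hX₁.compact
  set Ug := ⋃₀ {G : Set X₂ | IsClopen G ∧ IsUpperSet G ∧ f ⁻¹' G ⊆ W} with hUg
  have hUgo : IsOpen Ug := isOpen_sUnion fun G hG => hG.1.isOpen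
  have hUgu : IsUpperSet Ug := isUpperSet_sUnion fun G hG => hG.2.1
  have hpre : f ⁻¹' closure Ug ⊆ W := by
    rw [hfj Ug hUgo hUgu]
    have hUgW : f ⁻¹' Ug ⊆ W := by
      rintro y hy
      obtain ⟨G, hG, hyG⟩ := hy
      exact hG.2.2 hyG
    calc closure (f ⁻¹' Ug) ⊆ closure W := closure_mono hUgW
      _ = W := hWc.isClosed.closure_eq
  obtain ⟨hclc, hclu⟩ := hX₂.closure_open_upper hUgo hUgu
  have hregU : regPart U ⊆ V ∪ closure Ug := by
    rintro p ⟨c, ⟨hcc, hcu, hcd⟩, hpc⟩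
    have hdlc : IsClopen (lowerClosure c : Set X₂) := hX₂.esakia c hcc
    set cstar := ((lowerClosure c : Set X₂))ᶜ with hcstar
    have hcstarc : IsClopen cstar := hdlc.compl
    have hcstaru : IsUpperSet cstar := (lowerClosure c).lower.compl
    have hcover : ∀ w : X₁, w ∈ f ⁻¹' cstar ∪ W ∪ f ⁻¹' V := by
      intro w
      by_cases hw : f w ∈ (lowerClosure c : Set X₂)
      · rcases hsub (hcd hw) with h | h
        · exact Or.inr h
        · exact Or.inl (Or.inr h)
      · exact Or.inl (Or.inl hw)
    have hrVo : IsOpen (regPart V) := isOpen_sUnion fun G hG => hG.1.isOpen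
    have hrVu : IsUpperSet (regPart V) := isUpperSet_sUnion fun G hG => hG.2.1
    set S := f ⁻¹' cstar ∪ W ∪ f ⁻¹' regPart V with hS
    have hSo : IsOpen S :=
      (((hcstarc.preimage hfc).isOpen).union hWc.isOpen).union (hrVo.preimage hfc)
    have hSu : IsUpperSet S := ((hcstaru.preimage hfm).union hWu).union (hrVu.preimage hfm)
    have hd : ∀ q : X₁, q ∈ closure S := by
      intro q
      rcases hcover q with h | h
      · exact subset_closure (Or.inl h)
      · have h1 : q ∈ f ⁻¹' closure (regPart V) := hr V hVc hVu h
        rw [hfj _ hrVo hrVu] at h1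
        exact closure_mono (fun y hy => Or.inr hy) h1
    have hSuniv : S = Set.univ := dense_open_upper_eq_univ hX₁ hk hSo hSu hd
    obtain ⟨d, hdc, hdu, hdV, hcov2⟩ : ∃ d : Set X₂, IsClopen d ∧ IsUpperSet d ∧
        (lowerClosure d : Set X₂) ⊆ V ∧ ∀ w : X₁, w ∈ f ⁻¹' cstar ∪ W ∪ f ⁻¹' d := by
      have hcov : Set.univ ⊆ ⋃ i : {d : Set X₂ // IsClopen d ∧ IsUpperSet d ∧
          (lowerClosure d : Set X₂) ⊆ V}, (f ⁻¹' cstar ∪ W ∪ f ⁻¹' i.1) := by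
        intro q _
        have hqS : q ∈ S := by rw [hSuniv]; trivial
        rcases hqS with h | h
        · exact Set.mem_iUnion.mpr ⟨⟨∅, isClopen_empty, isUpperSet_empty, by simp⟩, Or.inl h⟩
        · obtain ⟨G, hG, hqG⟩ := h
          exact Set.mem_iUnion.mpr ⟨⟨G, hG⟩, Or.inr hqG⟩
      obtain ⟨t, ht⟩ := isCompact_univ.elim_finite_subcover _ (fun i =>
        (((hcstarc.preimage hfc).isOpen.union hWc.isOpen).union
          ((i.2.1.preimage hfc).isOpen))) hcov
      refine ⟨⋃ i ∈ t, (i : {d : Set X₂ // IsClopen d ∧ IsUpperSet d ∧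
          (lowerClosure d : Set X₂) ⊆ V}).1, ?_, ?_, ?_, ?_⟩
      · exact isClopen_biUnion_finset fun i _ => i.2.1
      · exact isUpperSet_iUnion₂ fun i _ => i.2.2.1
      · intro q hq
        obtain ⟨r, hr', hqr⟩ := mem_lowerClosure.mp hq
        obtain ⟨i, hit, hri⟩ := Set.mem_iUnion₂.mp hr'
        exact i.2.2.2 (mem_lowerClosure.mpr ⟨r, hri, hqr⟩)
      · intro w
        have hw := ht (Set.mem_univ w)
        obtain ⟨i, hit, hwi⟩ := Set.mem_iUnion₂.mp hw
        rcases hwi with h | h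
        · exact Or.inl h
        · exact Or.inr (Set.mem_iUnion₂.mpr ⟨i, hit, h⟩)
    by_cases hp : p ∈ (lowerClosure d : Set X₂)
    · exact Or.inl (hdV hp)
    · refine Or.inr (subset_closure ?_)
      refine Set.mem_sUnion.mpr ⟨c ∩ ((lowerClosure d : Set X₂))ᶜ, ⟨?_, ?_, ?_⟩, hpc, hp⟩
      · exact hcc.inter (hX₂.esakia d hdc).compl
      · exact hcu.inter (lowerClosure d).lower.compl
      · intro y hy
        rcases hcov2 y with h | h
        · rcases h with h | h
          · exact absurd (subset_lowerClosure hy.1) h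
          · exact h
        · exact absurd (subset_lowerClosure (show f y ∈ d from h)) hy.2
  have main : U ⊆ V ∪ closure Ug := fun q hq =>
    closure_minimal hregU (hVc.isClosed.union isClosed_closure) (hr U hUc hUu hq)
  rcases main hzU with h | h
  · exact hzV h
  · exact hxW (hpre (show f x ∈ closure Ug from hclu hz h))

end Aux

/-- A proper L-morphism from an L-compact L-space to an L-regular L-space
satisfies `f '' (↓x) = ↓(f x)` for every `x`. -/
theorem properLMorphism_image_Iic {X₁ X₂ : Type*}
    [TopologicalSpace X₁] [PartialOrder X₁] [TopologicalSpace X₂] [PartialOrder X₂]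
    (hX₁ : IsLSpace X₁) (hX₂ : IsLSpace X₂)
    (hk : IsLCompact X₁) (hr : IsLRegular X₂)
    (f : X₁ → X₂) (hf : IsProperLMorphism f) :
    ∀ x : X₁, f '' Set.Iic x = Set.Iic (f x) := by
  intro x
  obtain ⟨⟨hfc, hfm, hfj⟩, -⟩ := hf
  haveI := hX₁.compact
  apply Set.Subset.antisymm
  · rintro _ ⟨y, hy, rfl⟩
    exact hfm hy
  · intro z hz
    rw [Set.mem_Iic] at hz
    -- KEY nonemptiness claim
    have key : ∀ U V : Set X₂, IsClopen U → IsUpperSet U → IsClopen V → IsUpperSet V →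
        z ∈ U → z ∉ V → (Set.Iic x ∩ (f ⁻¹' U ∩ (f ⁻¹' V)ᶜ)).Nonempty := by
      intro U V hUc hUu hVc hVu hzU hzV
      by_contra hemp
      rw [Set.not_nonempty_iff_eq_empty] at hemp
      -- Step A: extract a clopen upper set W of X₁ with x ∉ W covering f⁻¹U \ f⁻¹V
      obtain ⟨W, hWc, hWu, hxW, hsub⟩ :
          ∃ W : Set X₁, IsClopen W ∧ IsUpperSet W ∧ x ∉ W ∧ f ⁻¹' U ⊆ f ⁻¹' V ∪ W := by
        have hCc : IsClopen (f ⁻¹' U ∩ (f ⁻¹' V)ᶜ) :=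
          (hUc.preimage hfc).inter (hVc.preimage hfc).compl
        have hCcomp : IsCompact (f ⁻¹' U ∩ (f ⁻¹' V)ᶜ) := hCc.isClosed.isCompact
        have hcov : f ⁻¹' U ∩ (f ⁻¹' V)ᶜ ⊆ ⋃ i : {W : Set X₁ // IsClopen W ∧
            IsUpperSet W ∧ x ∉ W}, i.1 := by
          intro y hy
          have hyx : ¬ y ≤ x := by
            intro hyx
            have : y ∈ Set.Iic x ∩ (f ⁻¹' U ∩ (f ⁻¹' V)ᶜ) := ⟨hyx, hy⟩
            rw [hemp] at this
            exact this
          obtain ⟨Wy, hWyc, hWyu, hyW, hxW⟩ := hX₁.priestley y x hyx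
          exact Set.mem_iUnion.mpr ⟨⟨Wy, hWyc, hWyu, hxW⟩, hyW⟩
        obtain ⟨t, ht⟩ := hCcomp.elim_finite_subcover _ (fun i => i.2.1.isOpen) hcov
        refine ⟨⋃ i ∈ t, (i : {W : Set X₁ // IsClopen W ∧ IsUpperSet W ∧ x ∉ W}).1,
          isClopen_biUnion_finset fun i _ => i.2.1,
          isUpperSet_iUnion₂ fun i _ => i.2.2.1, ?_, ?_⟩
        · intro hxmem
          obtain ⟨i, hit, hxi⟩ := Set.mem_iUnion₂.mp hxmem
          exact i.2.2.2 hxi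
        · intro y hy
          by_cases hyV : y ∈ f ⁻¹' V
          · exact Or.inl hyV
          · exact Or.inr (ht ⟨hy, hyV⟩)
      exact crux hX₁ hX₂ hk hr hfc hfm hfj hz hUc hUu hVc hVu hzU hzV hWc hWu hxW hsub
    -- FIP via directed intersection of compact sets
    have hne : Nonempty {p : Set X₂ × Set X₂ // IsClopen p.1 ∧ IsUpperSet p.1 ∧
        IsClopen p.2 ∧ IsUpperSet p.2 ∧ z ∈ p.1 ∧ z ∉ p.2} :=
      ⟨⟨(Set.univ, ∅), isClopen_univ, isUpperSet_univ, isClopen_empty, isUpperSet_empty,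
        Set.mem_univ z, Set.notMem_empty z⟩⟩
    have hinter : (⋂ i : {p : Set X₂ × Set X₂ // IsClopen p.1 ∧ IsUpperSet p.1 ∧
        IsClopen p.2 ∧ IsUpperSet p.2 ∧ z ∈ p.1 ∧ z ∉ p.2},
        (Set.Iic x ∩ (f ⁻¹' i.1.1 ∩ (f ⁻¹' i.1.2)ᶜ))).Nonempty := by
      apply IsCompact.nonempty_iInter_of_directed_nonempty_isCompact_isClosed
      · rintro i j
        refine ⟨⟨(i.1.1 ∩ j.1.1, i.1.2 ∪ j.1.2), i.2.1.inter j.2.1,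
          i.2.2.1.inter j.2.2.1, i.2.2.2.1.union j.2.2.2.1,
          i.2.2.2.2.1.union j.2.2.2.2.1, ⟨i.2.2.2.2.2.1, j.2.2.2.2.2.1⟩, ?_⟩, ?_, ?_⟩
        · rintro (h | h)
          · exact i.2.2.2.2.2.2 h
          · exact j.2.2.2.2.2.2 h
        · rintro y ⟨hy1, hy2, hy3⟩
          exact ⟨hy1, hy2.1, fun hmem => hy3 (Or.inl hmem)⟩
        · rintro y ⟨hy1, hy2, hy3⟩
          exact ⟨hy1, hy2.2, fun hmem => hy3 (Or.inr hmem)⟩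
      · rintro i
        exact key i.1.1 i.1.2 i.2.1 i.2.2.1 i.2.2.2.1 i.2.2.2.2.1 i.2.2.2.2.2.1
          i.2.2.2.2.2.2
      · intro i
        exact ((hX₁.isClosed_Iic x).inter ((i.2.1.preimage hfc).isClosed.inter
          (i.2.2.2.1.preimage hfc).isOpen.isClosed_compl)).isCompact
      · intro i
        exact (hX₁.isClosed_Iic x).inter ((i.2.1.preimage hfc).isClosed.inter
          (i.2.2.2.1.preimage hfc).isOpen.isClosed_compl)
    obtain ⟨y, hy⟩ := hinter
    simp only [Set.mem_iInter] at hy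
    have hyx : y ≤ x := (hy ⟨(Set.univ, ∅), isClopen_univ, isUpperSet_univ, isClopen_empty,
      isUpperSet_empty, Set.mem_univ z, Set.notMem_empty z⟩).1
    have hfwd : ∀ U : Set X₂, IsClopen U → IsUpperSet U → z ∈ U → f y ∈ U := by
      intro U hUc hUu hzU
      exact (hy ⟨(U, ∅), hUc, hUu, isClopen_empty, isUpperSet_empty, hzU,
        Set.notMem_empty z⟩).2.1
    have hbwd : ∀ V : Set X₂, IsClopen V → IsUpperSet V → z ∉ V → f y ∉ V := by
      intro V hVc hVu hzV
      exact (hy ⟨(Set.univ, V), isClopen_univ, isUpperSet_univ, hVc, hVu,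
        Set.mem_univ z, hzV⟩).2.2
    have h1 : z ≤ f y := by
      by_contra h
      obtain ⟨U, hUc, hUu, hzU, hfyU⟩ := hX₂.priestley z (f y) h
      exact hfyU (hfwd U hUc hUu hzU)
    have h2 : f y ≤ z := by
      by_contra h
      obtain ⟨U, hUc, hUu, hfyU, hzU⟩ := hX₂.priestley (f y) z h
      exact hbwd U hUc hUu hzU hfyU
    exact ⟨y, hyx, le_antisymm h2 h1⟩
end

section
/- Let h : L → M be a frame homomorphism from a regular frame L to a compact frame M, and let r : M → L be its right adjoint, r(b) = ⨆{a ∈ L | h(a) ≤ b}. Then h is closed: r(h(a) ⊔ b) ≤ a ⊔ r(b) for all a ∈ L and b ∈ M. -/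
section Aux

variable {L : Type*} [Order.Frame L]

/-- Pseudocomplement. -/
def pcAux (x : L) : L := sSup {y : L | x ⊓ y = ⊥}

lemma inf_pcAux_eq_bot (x : L) : x ⊓ pcAux x = ⊥ := by
  rw [pcAux, inf_sSup_eq]
  apply le_bot_iff.mp
  exact iSup₂_le fun y hy => hy.le

lemma le_pcAux {x y : L} (hxy : x ⊓ y = ⊥) : y ≤ pcAux x := le_sSup hxy

lemma pcAux_inf_le_pcAux_sup (e e' : L) : pcAux e ⊓ pcAux e' ≤ pcAux (e ⊔ e') := by
  apply le_pcAux
  rw [inf_sup_right]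
  apply le_bot_iff.mp
  apply sup_le
  · calc e ⊓ (pcAux e ⊓ pcAux e') ≤ e ⊓ pcAux e := by gcongr; exact inf_le_left
      _ = ⊥ := inf_pcAux_eq_bot e
  · calc e' ⊓ (pcAux e ⊓ pcAux e') ≤ e' ⊓ pcAux e' := by gcongr; exact inf_le_right
      _ = ⊥ := inf_pcAux_eq_bot e'

end Aux

/-- A frame homomorphism from a regular frame to a compact frame is closed:
`r (h a ⊔ b) ≤ a ⊔ r b`, where `r` is the right adjoint of `h`. Here `b* =
⨆ {x | b ⊓ x = ⊥}` is the pseudocomplement, `b ≺ a` means `b* ⊔ a = ⊤`,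
regularity of `L` means every `a` is the join of the elements well inside it,
and compactness of `M` means `⊤` is a compact element. -/
theorem frameHom_regular_to_compact_closed {L M : Type*}
    [Order.Frame L] [Order.Frame M] (h : FrameHom L M)
    (hreg : ∀ a : L, a = sSup {b : L | sSup {x : L | b ⊓ x = ⊥} ⊔ a = ⊤})
    (hcomp : ∀ S : Set M, (⊤ : M) ≤ sSup S →
      ∃ T : Finset M, ↑T ⊆ S ∧ (⊤ : M) ≤ T.sup id) :
    ∀ (a : L) (b : M),
      sSup {a' : L | h a' ≤ h a ⊔ b} ≤ a ⊔ sSup {a' : L | h a' ≤ b} := by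
  intro a b
  apply sSup_le
  intro c hc
  have hc' : h c ≤ h a ⊔ b := hc
  calc c = sSup {d : L | pcAux d ⊔ c = ⊤} := hreg c
    _ ≤ a ⊔ sSup {a' : L | h a' ≤ b} := by
      apply sSup_le
      intro d hd
      have hd' : pcAux d ⊔ c = ⊤ := hd
      -- u is the element `pcAux d ⊔ a`
      set u : L := pcAux d ⊔ a with hu
      have h1 : (⊤ : M) ≤ h u ⊔ b := by
        have : (⊤ : M) = h (pcAux d) ⊔ h c := by
          rw [← map_sup, hd', map_top]
        calc (⊤ : M) = h (pcAux d) ⊔ h c := this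
          _ ≤ h (pcAux d) ⊔ (h a ⊔ b) := by gcongr
          _ = h u ⊔ b := by rw [hu, map_sup, sup_assoc]
      set E : Set L := {e : L | pcAux e ⊔ u = ⊤} with hE
      have hUE : u = sSup E := hreg u
      have h2 : (⊤ : M) ≤ sSup ((h '' E) ∪ {b}) := by
        rw [sSup_union, sSup_singleton, sSup_image]
        calc (⊤ : M) ≤ h u ⊔ b := h1
          _ = (⨆ e ∈ E, h e) ⊔ b := by
            rw [hUE, map_sSup, sSup_image]
      obtain ⟨T, hT, hsup⟩ := hcomp _ h2
      -- extract a single e ∈ E dominating the h-parts of T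
      classical
      have key : ∀ T : Finset M, ↑T ⊆ (h '' E) ∪ {b} →
          ∃ e ∈ E, T.sup id ≤ h e ⊔ b := by
        intro T
        induction T using Finset.induction_on with
        | empty =>
          intro _
          refine ⟨⊥, ?_, by simp⟩
          have : pcAux (⊥ : L) = ⊤ := by
            apply top_unique; apply le_pcAux; simp
          simp [hE, this]
        | insert _ _ hx ih =>
          rename_i t T'
          intro hsub
          have hsub' : ↑T' ⊆ (h '' E) ∪ {b} := by
            intro x hxm; exact hsub (by simp [hxm])
          obtain ⟨e, he, hle⟩ := ih hsub'
          have ht : t ∈ (h '' E) ∪ {b} := hsub (by simp)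
          rcases ht with ⟨e₀, he₀, rfl⟩ | ht
          · refine ⟨e ⊔ e₀, ?_, ?_⟩
            · have : (pcAux e ⊓ pcAux e₀) ⊔ u = ⊤ := by
                rw [sup_inf_right, he, he₀, inf_top_eq]
              have := sup_le_sup_right (pcAux_inf_le_pcAux_sup e e₀) u
              exact top_unique (by rw [← ‹(pcAux e ⊓ pcAux e₀) ⊔ u = ⊤›]; exact this)
            · rw [Finset.sup_insert]
              apply sup_le
              · exact le_sup_of_le_left (OrderHomClass.mono h le_sup_right)
              · exact hle.trans (by gcongr; exact le_sup_left)
          · refine ⟨e, he, ?_⟩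
            rw [Finset.sup_insert]
            simp only [Set.mem_singleton_iff] at ht
            subst ht
            exact sup_le (le_sup_right) hle
      obtain ⟨e, he, hle⟩ := key T hT
      have htop : (⊤ : M) ≤ h e ⊔ b := hsup.trans hle
      -- h (pcAux e) ≤ b
      have h3 : h (pcAux e) ≤ b := by
        calc h (pcAux e) = h (pcAux e) ⊓ (h e ⊔ b) := by
              rw [inf_eq_left.mpr (le_top.trans htop)]
          _ = (h (pcAux e) ⊓ h e) ⊔ (h (pcAux e) ⊓ b) := inf_sup_left _ _ _
          _ ≤ b := by
              rw [← map_inf, inf_comm, inf_pcAux_eq_bot, map_bot]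
              exact sup_le bot_le inf_le_right
      have h4 : pcAux e ≤ sSup {a' : L | h a' ≤ b} := le_sSup h3
      -- d ≤ a ⊔ r b
      have h5 : pcAux e ⊔ u = ⊤ := he
      calc d = d ⊓ (pcAux e ⊔ (pcAux d ⊔ a)) := by rw [← hu, h5, inf_top_eq]
        _ = (d ⊓ pcAux e) ⊔ ((d ⊓ pcAux d) ⊔ (d ⊓ a)) := by
            rw [inf_sup_left, inf_sup_left]
        _ ≤ a ⊔ sSup {a' : L | h a' ≤ b} := by
            apply sup_le
            · exact le_sup_of_le_right (inf_le_right.trans h4)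
            · apply sup_le
              · rw [inf_pcAux_eq_bot]; exact bot_le
              · exact le_sup_of_le_left inf_le_right
end
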